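/- arXiv:2601.03497 — 4 statements merged into one kernel-verified Lean document; each statement's English description precedes it below -/
import Mathlib

section
/- The geometric mechanism satisfies ε-differential privacy: if M is an integer-valued query with ℓ1-sensitivity Δ (i.e., |M(D) - M(D')| ≤ Δ for all neighboring D, D'), then for all neighboring datasets D, D' and all integers s, Pr(M(D) + δ = s) ≤ e^ε · Pr(M(D') + δ = s), where δ follows the double-geometric distribution with parameter ε/Δ. -/
/-! Moving the centre of a double-geometric distribution with rate `a` by `d` changes each point
mass by a factor at most `exp (a * |d|)`, since `|y| - |x| ≤ |x - y|`. The mechanism moves the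
centre from `M D'` to `M D`, and `|M D - M D'| ≤ Δ`, so with `a = ε / Δ` the factor is at most
`exp ε`. -/

open Real

noncomputable def doubleGeometricMass (a : ℝ) (k : ℤ) : ℝ :=
  (1 - exp (-a)) / (1 + exp (-a)) * exp (-a * |(k : ℝ)|)

lemma one_sub_exp_neg_div_one_add_exp_neg_nonneg {a : ℝ} (ha : 0 ≤ a) :
    0 ≤ (1 - exp (-a)) / (1 + exp (-a)) := by
  have : 0 ≤ 1 - exp (-a) := sub_nonneg.mpr (exp_le_one_iff.mpr (neg_nonpos.mpr ha))
  positivity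

lemma doubleGeometricMass_nonneg {a : ℝ} (ha : 0 ≤ a) (k : ℤ) : 0 ≤ doubleGeometricMass a k :=
  mul_nonneg (one_sub_exp_neg_div_one_add_exp_neg_nonneg ha) (exp_nonneg _)

lemma exp_neg_mul_abs_le {a : ℝ} (ha : 0 ≤ a) (x y : ℝ) :
    exp (-a * |x|) ≤ exp (a * |x - y|) * exp (-a * |y|) := by
  rw [← exp_add, exp_le_exp]
  have : |y| - |x| ≤ |x - y| := abs_sub_comm x y ▸ abs_sub_abs_le_abs_sub y x
  nlinarith [mul_le_mul_of_nonneg_left this ha]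

lemma doubleGeometricMass_le_exp_mul {a : ℝ} (ha : 0 ≤ a) (k l : ℤ) :
    doubleGeometricMass a k ≤ exp (a * |((k - l : ℤ) : ℝ)|) * doubleGeometricMass a l := by
  unfold doubleGeometricMass
  rw [mul_left_comm, Int.cast_sub]
  exact mul_le_mul_of_nonneg_left (exp_neg_mul_abs_le ha _ _)
    (one_sub_exp_neg_div_one_add_exp_neg_nonneg ha)

/-- The geometric mechanism satisfies ε-differential privacy. -/
theorem geometric_mechanism_dp {Dataset : Type*}
    (Neighbor : Dataset → Dataset → Prop) (M : Dataset → ℤ)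
    (ε Δ : ℝ) (hε : 0 < ε) (hΔ : 0 < Δ)
    (hsens : ∀ D D', Neighbor D D' → (|(M D - M D' : ℤ)| : ℝ) ≤ Δ) :
    ∀ D D', Neighbor D D' → ∀ s : ℤ,
      ((1 - Real.exp (-ε / Δ)) / (1 + Real.exp (-ε / Δ))) *
          Real.exp (-ε * |((s - M D : ℤ) : ℝ)| / Δ)
        ≤ Real.exp ε *
          (((1 - Real.exp (-ε / Δ)) / (1 + Real.exp (-ε / Δ))) *
            Real.exp (-ε * |((s - M D' : ℤ) : ℝ)| / Δ)) := by
  intro D D' hN s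
  have hrate : 0 ≤ ε / Δ := by positivity
  have hshift : ε / Δ * |(((s - M D) - (s - M D') : ℤ) : ℝ)| ≤ ε := by
    have hdist : |(((s - M D) - (s - M D') : ℤ) : ℝ)| ≤ Δ := by
      rw [show (s - M D) - (s - M D') = -(M D - M D') by ring, Int.cast_neg, abs_neg]
      exact_mod_cast hsens D D' hN
    calc ε / Δ * |(((s - M D) - (s - M D') : ℤ) : ℝ)| ≤ ε / Δ * Δ := by gcongr
      _ = ε := div_mul_cancel₀ ε hΔ.ne'
  have hmass : ∀ k : ℤ, (1 - exp (-ε / Δ)) / (1 + exp (-ε / Δ)) * exp (-ε * |(k : ℝ)| / Δ)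
      = doubleGeometricMass (ε / Δ) k := fun k => by
    rw [doubleGeometricMass]
    ring_nf
  rw [hmass, hmass]
  calc doubleGeometricMass (ε / Δ) (s - M D)
      ≤ exp (ε / Δ * |(((s - M D) - (s - M D') : ℤ) : ℝ)|) *
          doubleGeometricMass (ε / Δ) (s - M D') :=
        doubleGeometricMass_le_exp_mul hrate _ _
    _ ≤ exp ε * doubleGeometricMass (ε / Δ) (s - M D') := by
        gcongr
        exact doubleGeometricMass_nonneg hrate _
end

section
/- Let D and D' be neighboring datasets of n real p-dimensional records, each with at most one value equal to the sample median in every coordinate. For any pair of coordinates j < j', let t_{jj'}(D) count the records with both coordinates at least their respective sample medians. Then |t_{jj'}(D') - t_{jj'}(D)| ≤ 1, and this bound is tight; i.e., the ℓ1-sensitivity of t_{jj'} is exactly 1. -/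
open Finset

/-- The sample median of a vector of reals: the entry of index `n/2`
(0-indexed) in the sorted list, so that (absent ties at the median) exactly
`n/2` of the `n` entries are `≥` the median when `n` is even. -/
noncomputable def sampleMed {n : ℕ} (v : Fin n → ℝ) : ℝ :=
  ((List.ofFn v).mergeSort (· ≤ ·)).getD (n / 2) 0

/-- `t_{jj'}(D)`: the number of records whose `j`-th and `j'`-th coordinates
are both at least the respective sample medians. -/
noncomputable def tStat {n p : ℕ} (D : Fin n → Fin p → ℝ) (j j' : Fin p) : ℕ :=
  (univ.filter (fun i =>
    sampleMed (fun i' => D i' j) ≤ D i j ∧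
    sampleMed (fun i' => D i' j') ≤ D i j')).card

/-- `D` has no ties at the medians: each column has at most one entry equal to
its sample median. -/
def NoMedianTies {n p : ℕ} (D : Fin n → Fin p → ℝ) : Prop :=
  ∀ j : Fin p,
    (univ.filter (fun i => D i j = sampleMed (fun i' => D i' j))).card ≤ 1

/-- Neighboring datasets: they differ in the record of exactly at most one
individual (by substitution). -/
def NeighborData {n p : ℕ} (D D' : Fin n → Fin p → ℝ) : Prop :=
  ∃ l : Fin n, ∀ i : Fin n, i ≠ l → D i = D' i

lemma cardFilter_eq {n : ℕ} (v : Fin n → ℝ) (q : ℝ → Prop) [DecidablePred q] :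
    (univ.filter fun i => q (v i)).card
      = ((List.ofFn v).mergeSort (· ≤ ·)).countP (fun x => decide (q x)) := by
  rw [(List.mergeSort_perm (List.ofFn v) _).countP_eq]
  rw [List.ofFn_eq_map, List.countP_map]
  rw [Fin.univ_def]
  simp [Finset.filter, Multiset.countP_eq_card_filter, Function.comp]
  rw [List.countP_eq_length_filter]; rfl

lemma mergeSort_sorted {n : ℕ} (v : Fin n → ℝ) :
    ∀ (i j : ℕ) (hi : i < ((List.ofFn v).mergeSort (· ≤ ·)).length)
      (hj : j < ((List.ofFn v).mergeSort (· ≤ ·)).length), i ≤ j →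
      ((List.ofFn v).mergeSort (· ≤ ·))[i] ≤ ((List.ofFn v).mergeSort (· ≤ ·))[j] := by
  have h := List.pairwise_mergeSort (le := fun a b : ℝ => decide (a ≤ b))
    (by intro a b c hab hbc; simp at *; linarith)
    (by intro a b; simpa using le_total a b) (List.ofFn v)
  rw [List.pairwise_iff_getElem] at h
  intro i j hi hj hij
  rcases eq_or_lt_of_le hij with rfl | hlt
  · exact le_refl _
  · simpa using h i j hi hj hlt

lemma mergeSort_length {n : ℕ} (v : Fin n → ℝ) :
    ((List.ofFn v).mergeSort (· ≤ ·)).length = n := by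
  rw [(List.mergeSort_perm (List.ofFn v) _).length_eq, List.length_ofFn]

lemma sorted_countP_ge_drop {L : List ℝ}
    (hs : ∀ (i j : ℕ) (hi : i < L.length) (hj : j < L.length), i ≤ j → L[i] ≤ L[j])
    {k : ℕ} (hk : k < L.length) :
    L.length - k ≤ L.countP (fun x => decide (L[k] ≤ x)) := by
  have h1 : (L.drop k).countP (fun x => decide (L[k] ≤ x)) ≤ L.countP (fun x => decide (L[k] ≤ x)) :=
    (List.drop_sublist k L).countP_le
  have h2 : (L.drop k).countP (fun x => decide (L[k] ≤ x)) = (L.drop k).length := by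
    rw [List.countP_eq_length]
    intro a ha
    obtain ⟨i, hi, rfl⟩ := List.mem_iff_getElem.mp ha
    rw [List.length_drop] at hi
    rw [List.getElem_drop]
    simpa using hs k (k + i) hk (by omega) (by omega)
  rw [h2, List.length_drop] at h1
  omega

lemma sorted_countP_ge_take {L : List ℝ}
    (hs : ∀ (i j : ℕ) (hi : i < L.length) (hj : j < L.length), i ≤ j → L[i] ≤ L[j])
    {k : ℕ} (hk : k < L.length) :
    k + 1 ≤ L.countP (fun x => decide (x ≤ L[k])) := by
  have h1 : (L.take (k+1)).countP (fun x => decide (x ≤ L[k])) ≤ L.countP (fun x => decide (x ≤ L[k])) :=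
    (List.take_sublist (k+1) L).countP_le
  have h2 : (L.take (k+1)).countP (fun x => decide (x ≤ L[k])) = (L.take (k+1)).length := by
    rw [List.countP_eq_length]
    intro a ha
    obtain ⟨i, hi, rfl⟩ := List.mem_iff_getElem.mp ha
    rw [List.length_take] at hi
    rw [List.getElem_take]
    simpa using hs i k (by omega) hk (by omega)
  rw [h2, List.length_take] at h1
  omega


lemma card_ge_med {n : ℕ} (hn : 0 < n) (he : n % 2 = 0) (v : Fin n → ℝ)
    (hties : (univ.filter fun i => v i = sampleMed v).card ≤ 1) :
    (univ.filter fun i => sampleMed v ≤ v i).card = n / 2 := by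
  classical
  set L := (List.ofFn v).mergeSort (· ≤ ·) with hL
  have hlen : L.length = n := mergeSort_length v
  have hk : n / 2 < L.length := by omega
  have hm : sampleMed v = L[n/2] := List.getD_eq_getElem L 0 hk
  set m := sampleMed v with hmdef
  -- counts
  have hA : (univ.filter fun i => m ≤ v i).card = L.countP (fun x => decide (m ≤ x)) :=
    cardFilter_eq v (fun x => m ≤ x)
  have hC : (univ.filter fun i => v i ≤ m).card = L.countP (fun x => decide (x ≤ m)) :=
    cardFilter_eq v (fun x => x ≤ m)
  have hAB : (univ.filter fun i => m ≤ v i).card + (univ.filter fun i => v i < m).card = n := by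
    have := Finset.card_filter_add_card_filter_not (s := (univ : Finset (Fin n)))
      (p := fun i => m ≤ v i)
    simp only [not_le] at this
    simpa using this
  have hCBE : (univ.filter fun i => v i ≤ m).card
      = (univ.filter fun i => v i < m).card + (univ.filter fun i => v i = m).card := by
    have h1 : (univ.filter fun i => v i < m) ∪ (univ.filter fun i => v i = m)
        = (univ.filter fun i => v i ≤ m) := by
      rw [← Finset.filter_or]
      apply Finset.filter_congr
      intro i _
      exact ⟨fun h => h.elim le_of_lt le_of_eq, fun h => lt_or_eq_of_le h⟩
    have h2 : Disjoint (univ.filter fun i => v i < m) (univ.filter fun i => v i = m) := by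
      rw [Finset.disjoint_filter]
      intro i _ h h'
      exact absurd h' (ne_of_lt h)
    rw [← h1, Finset.card_union_of_disjoint h2]
  have hge : n - n/2 ≤ (univ.filter fun i => m ≤ v i).card := by
    rw [hA]
    have := sorted_countP_ge_drop (mergeSort_sorted v) hk
    rw [hlen] at this
    simpa [← hm, ← hL] using this
  have hle : n/2 + 1 ≤ (univ.filter fun i => v i ≤ m).card := by
    rw [hC]
    have := sorted_countP_ge_take (mergeSort_sorted v) hk
    simpa [← hm, ← hL] using this
  omega

lemma sampleMed_eq_of {n : ℕ} (hn : 0 < n) (v : Fin n → ℝ) (m : ℝ) (i0 : Fin n) (h0 : v i0 = m)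
    (hcount : (univ.filter fun i => v i < m).card = n / 2) : sampleMed v = m := by
  classical
  set L := (List.ofFn v).mergeSort (· ≤ ·) with hL
  have hlen : L.length = n := mergeSort_length v
  have hk : n / 2 < L.length := by omega
  have hms : sampleMed v = L[n/2] := List.getD_eq_getElem L 0 hk
  have hmem : m ∈ L := by
    rw [(List.mergeSort_perm (List.ofFn v) _).mem_iff]
    rw [List.mem_ofFn]
    exact ⟨i0, h0⟩
  have hcnt : L.countP (fun x => decide (x < m)) = n / 2 := by
    rw [← cardFilter_eq v (fun x => x < m), hcount]
  have hs := mergeSort_sorted v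
  rw [← hL] at hs
  -- m ≤ L[n/2]
  have h1 : m ≤ L[n/2] := by
    by_contra hcon
    push_neg at hcon
    have htake := sorted_countP_ge_take hs hk
    have hmono : L.countP (fun x => decide (x ≤ L[n/2])) ≤ L.countP (fun x => decide (x < m)) := by
      apply List.countP_mono_left
      intro a _ ha
      simp at ha ⊢
      exact lt_of_le_of_lt ha hcon
    omega
  -- L[n/2] ≤ m
  have h2 : L[n/2] ≤ m := by
    obtain ⟨i, hi, hLi⟩ := List.mem_iff_getElem.mp hmem
    rcases le_or_gt (n/2) i with hcase | hcase
    · rw [← hLi]; exact hs (n/2) i hk hi hcase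
    · exfalso
      have hsplit : L.countP (fun x => decide (x < m))
          = (L.take i).countP (fun x => decide (x < m)) + (L.drop i).countP (fun x => decide (x < m)) := by
        conv_lhs => rw [← List.take_append_drop i L, List.countP_append]
      have hz : (L.drop i).countP (fun x => decide (x < m)) = 0 := by
        rw [List.countP_eq_zero]
        intro a ha
        obtain ⟨j, hj, rfl⟩ := List.mem_iff_getElem.mp ha
        rw [List.length_drop] at hj
        rw [List.getElem_drop]
        simp only [decide_eq_true_eq, not_lt]
        rw [← hLi]
        exact hs i (i + j) hi (by omega) (by omega)
      have htk : (L.take i).countP (fun x => decide (x < m)) ≤ i := by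
        calc _ ≤ (L.take i).length := List.countP_le_length
        _ ≤ i := by rw [List.length_take]; omega
      omega
  rw [hms]
  exact le_antisymm h2 h1

lemma card_filter_val_lt {n k : ℕ} (h : k ≤ n) :
    (univ.filter fun i : Fin n => i.val < k).card = k := by
  rw [show (univ.filter fun i : Fin n => i.val < k)
      = (Finset.range k).attachFin (fun m hm => lt_of_lt_of_le (Finset.mem_range.mp hm) h) from ?_]
  · exact (Finset.card_attachFin _ _).trans (Finset.card_range k)
  · ext i
    simp [Finset.mem_attachFin]

lemma card_filter_le_val {n k : ℕ} (h : k ≤ n) :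
    (univ.filter fun i : Fin n => k ≤ i.val).card = n - k := by
  have := Finset.card_filter_add_card_filter_not (s := (univ : Finset (Fin n)))
    (p := fun i => i.val < k)
  simp only [not_lt, card_filter_val_lt h, Finset.card_univ, Fintype.card_fin] at this
  omega

lemma ties_of_inj {n : ℕ} {v : Fin n → ℝ} (hv : Function.Injective v) (m : ℝ) :
    (univ.filter fun i => v i = m).card ≤ 1 := by
  rw [Finset.card_le_one]
  intro i hi i' hi'
  simp only [Finset.mem_filter] at hi hi'
  exact hv (hi.2.trans hi'.2.symm)


lemma tStat_step {n p : ℕ} (hn : 0 < n) (he : n % 2 = 0) (j j' : Fin p)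
    (D D' : Fin n → Fin p → ℝ) (l : Fin n) (hnb : ∀ i : Fin n, i ≠ l → D i = D' i)
    (hD : NoMedianTies D) (hD' : NoMedianTies D') :
    (tStat D' j j' : ℤ) ≤ (tStat D j j' : ℤ) + 1 := by
  classical
  set m1 := sampleMed (fun i' => D i' j) with hm1
  set m2 := sampleMed (fun i' => D i' j') with hm2
  set m1' := sampleMed (fun i' => D' i' j) with hm1'
  set m2' := sampleMed (fun i' => D' i' j') with hm2'
  set U : Finset (Fin n) := univ.erase l with hU
  set S := U.filter (fun i => m1 ≤ D i j) with hS
  set T := U.filter (fun i => m2 ≤ D i j') with hT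
  set S' := U.filter (fun i => m1' ≤ D' i j) with hS'
  set T' := U.filter (fun i => m2' ≤ D' i j') with hT'
  have hUeq : ∀ i ∈ U, D i = D' i := by
    intro i hi
    exact hnb i (Finset.ne_of_mem_erase hi)
  -- nestedness
  have nestS : S ⊆ S' ∨ S' ⊆ S := by
    have hrw : S' = U.filter (fun i => m1' ≤ D i j) := by
      apply Finset.filter_congr
      intro i hi
      rw [hUeq i hi]
    rcases le_total m1 m1' with h | h
    · right
      rw [hrw, hS]
      exact Finset.monotone_filter_right U (fun i _ hi => le_trans h hi)
    · left
      rw [hrw, hS]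
      exact Finset.monotone_filter_right U (fun i _ hi => le_trans h hi)
  have nestT : T ⊆ T' ∨ T' ⊆ T := by
    have hrw : T' = U.filter (fun i => m2' ≤ D i j') := by
      apply Finset.filter_congr
      intro i hi
      rw [hUeq i hi]
    rcases le_total m2 m2' with h | h
    · right
      rw [hrw, hT]
      exact Finset.monotone_filter_right U (fun i _ hi => le_trans h hi)
    · left
      rw [hrw, hT]
      exact Finset.monotone_filter_right U (fun i _ hi => le_trans h hi)
  -- indicators
  set a : ℕ := if m1 ≤ D l j then 1 else 0 with ha
  set b : ℕ := if m2 ≤ D l j' then 1 else 0 with hb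
  set a' : ℕ := if m1' ≤ D' l j then 1 else 0 with ha'
  set b' : ℕ := if m2' ≤ D' l j' then 1 else 0 with hb'
  -- generic card decomposition
  have key : ∀ (w : Fin n → ℝ) (m : ℝ),
      (U.filter fun i => m ≤ w i).card + (if m ≤ w l then 1 else 0)
        = (univ.filter fun i => m ≤ w i).card := by
    intro w m
    rw [hU, Finset.filter_erase]
    by_cases h : m ≤ w l
    · rw [if_pos h]
      exact Finset.card_erase_add_one (by simp [h])
    · rw [if_neg h, Finset.erase_eq_of_notMem (by simp [h]), add_zero]
  have hSa : S.card + a = n / 2 := by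
    rw [hS, ha, key (fun i => D i j) m1]
    exact card_ge_med hn he _ (hD j)
  have hTb : T.card + b = n / 2 := by
    rw [hT, hb, key (fun i => D i j') m2]
    exact card_ge_med hn he _ (hD j')
  have hS'a : S'.card + a' = n / 2 := by
    rw [hS', ha', key (fun i => D' i j) m1']
    exact card_ge_med hn he _ (hD' j)
  have hT'b : T'.card + b' = n / 2 := by
    rw [hT', hb', key (fun i => D' i j') m2']
    exact card_ge_med hn he _ (hD' j')
  have hale : a ≤ 1 ∧ b ≤ 1 ∧ a' ≤ 1 ∧ b' ≤ 1 := by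
    refine ⟨?_, ?_, ?_, ?_⟩ <;> simp only [ha, hb, ha', hb'] <;> split_ifs <;> omega
  -- sdiff bounds
  have hcbound : ∀ (X X' : Finset (Fin n)) (u u' : ℕ), (X ⊆ X' ∨ X' ⊆ X) →
      X.card + u = n / 2 → X'.card + u' = n / 2 → u ≤ 1 → u' ≤ 1 →
      (X' \ X).card ≤ u ∧ (X' \ X).card + u' ≤ 1 := by
    intro X X' u u' hnest hX hX' hu hu'
    rcases hnest with h | h
    · have := Finset.card_sdiff_add_card_eq_card h
      omega
    · have : (X' \ X).card = 0 := by
        simp [Finset.sdiff_eq_empty_iff_subset.mpr h]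
      omega
  obtain ⟨hc1, hc2⟩ := hcbound S S' a a' nestS hSa hS'a hale.1 hale.2.2.1
  obtain ⟨hd1, hd2⟩ := hcbound T T' b b' nestT hTb hT'b hale.2.1 hale.2.2.2
  -- intersection inclusion
  have hinc : S' ∩ T' ⊆ (S ∩ T) ∪ (S' \ S) ∪ (T' \ T) := by
    intro i hi
    simp only [Finset.mem_inter] at hi
    simp only [Finset.mem_union, Finset.mem_inter, Finset.mem_sdiff]
    by_cases h1 : i ∈ S
    · by_cases h2 : i ∈ T
      · exact Or.inl (Or.inl ⟨h1, h2⟩)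
      · exact Or.inr ⟨hi.2, h2⟩
    · exact Or.inl (Or.inr ⟨hi.1, h1⟩)
  have hxx' : (S' ∩ T').card ≤ (S ∩ T).card + (S' \ S).card + (T' \ T).card := by
    calc (S' ∩ T').card ≤ ((S ∩ T) ∪ (S' \ S) ∪ (T' \ T)).card := Finset.card_le_card hinc
    _ ≤ ((S ∩ T) ∪ (S' \ S)).card + (T' \ T).card := Finset.card_union_le _ _
    _ ≤ (S ∩ T).card + (S' \ S).card + (T' \ T).card :=
        add_le_add_left (Finset.card_union_le _ _) _
  -- tStat decomposition
  set ε : ℕ := if (m1 ≤ D l j ∧ m2 ≤ D l j') then 1 else 0 with hε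
  set ε' : ℕ := if (m1' ≤ D' l j ∧ m2' ≤ D' l j') then 1 else 0 with hε'
  have htD : tStat D j j' = (S ∩ T).card + ε := by
    rw [tStat, ← hm1, ← hm2, hS, hT, ← Finset.filter_and]
    rw [hε]
    by_cases h : (m1 ≤ D l j ∧ m2 ≤ D l j')
    · rw [if_pos h, hU, Finset.filter_erase]
      exact (Finset.card_erase_add_one (by simp [h.1, h.2])).symm
    · rw [if_neg h, hU, Finset.filter_erase, add_zero,
        Finset.erase_eq_of_notMem (by simp only [Finset.mem_filter, Finset.mem_univ, true_and]; exact h)]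
  have htD' : tStat D' j j' = (S' ∩ T').card + ε' := by
    rw [tStat, ← hm1', ← hm2', hS', hT', ← Finset.filter_and]
    rw [hε']
    by_cases h : (m1' ≤ D' l j ∧ m2' ≤ D' l j')
    · rw [if_pos h, hU, Finset.filter_erase]
      exact (Finset.card_erase_add_one (by simp [h.1, h.2])).symm
    · rw [if_neg h, hU, Finset.filter_erase, add_zero,
        Finset.erase_eq_of_notMem (by simp only [Finset.mem_filter, Finset.mem_univ, true_and]; exact h)]
  have hεab : ε ≤ a ∧ ε ≤ b ∧ a + b ≤ ε + 1 := by
    rw [hε, ha, hb]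
    by_cases h1 : m1 ≤ D l j <;> by_cases h2 : m2 ≤ D l j' <;> simp [h1, h2]
  have hεab' : ε' ≤ a' ∧ ε' ≤ b' ∧ a' + b' ≤ ε' + 1 := by
    rw [hε', ha', hb']
    by_cases h1 : m1' ≤ D' l j <;> by_cases h2 : m2' ≤ D' l j' <;> simp [h1, h2]
  omega


/-- Theorem 1: with no ties at the medians, the ℓ1-sensitivity of `t_{jj'}`
is exactly 1: the change across any pair of neighboring datasets is at most 1
in absolute value, and this bound is attained. -/
theorem tStat_sensitivity_one (n p : ℕ) (hn : 0 < n) (hneven : n % 2 = 0)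
    (j j' : Fin p) (hjj' : j < j') :
    (∀ D D' : Fin n → Fin p → ℝ, NeighborData D D' →
        NoMedianTies D → NoMedianTies D' →
        |(tStat D' j j' : ℤ) - (tStat D j j' : ℤ)| ≤ 1) ∧
    (∃ D D' : Fin n → Fin p → ℝ, NeighborData D D' ∧
        NoMedianTies D ∧ NoMedianTies D' ∧
        |(tStat D' j j' : ℤ) - (tStat D j j' : ℤ)| = 1) := by
  classical
  have hn2 : 2 ≤ n := by omega
  constructor
  · rintro D D' ⟨l, hl⟩ hD hD'
    rw [abs_sub_le_iff]
    constructor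
    · have := tStat_step hn hneven j j' D D' l hl hD hD'
      omega
    · have := tStat_step hn hneven j j' D' D l (fun i hi => (hl i hi).symm) hD' hD
      omega
  · set l : Fin n := ⟨n / 2, by omega⟩ with hl
    set D : Fin n → Fin p → ℝ := fun i _ => (i.val : ℝ) with hD
    set D' : Fin n → Fin p → ℝ := fun i c =>
      if i = l then (if c = j' then (-1 : ℝ) else (n : ℝ)) else (i.val : ℝ) with hD'
    refine ⟨D, D', ⟨l, fun i hi => ?_⟩, ?_, ?_, ?_⟩
    · funext c
      simp [hD, hD', hi]
    · -- NoMedianTies D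
      intro c
      apply ties_of_inj
      intro x y hxy
      simp only [hD] at hxy
      exact Fin.ext (by exact_mod_cast hxy)
    · -- NoMedianTies D'
      intro c
      apply ties_of_inj
      intro x y hxy
      simp only [hD'] at hxy
      by_cases hx : x = l <;> by_cases hy : y = l
      · rw [hx, hy]
      · exfalso
        rw [if_pos hx, if_neg hy] at hxy
        by_cases hc : c = j' <;> simp [hc] at hxy
        · have := Nat.cast_nonneg (α := ℝ) y.val; linarith
        · have : n = y.val := by exact_mod_cast hxy
          have := y.isLt; omega
      · exfalso
        rw [if_neg hx, if_pos hy] at hxy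
        by_cases hc : c = j' <;> simp [hc] at hxy
        · have := Nat.cast_nonneg (α := ℝ) x.val; linarith
        · have : x.val = n := by exact_mod_cast hxy
          have := x.isLt; omega
      · rw [if_neg hx, if_neg hy] at hxy
        exact Fin.ext (by exact_mod_cast hxy)
    · -- the computation
      have hjne : j ≠ j' := ne_of_lt hjj'
      have hD'l : ∀ c : Fin p, D' l c = if c = j' then (-1 : ℝ) else (n : ℝ) := by
        intro c; simp [hD']
      have hD'ne : ∀ (i : Fin n) (c : Fin p), i ≠ l → D' i c = (i.val : ℝ) := by
        intro i c hi; simp [hD', hi]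
      have hvall : l.val = n / 2 := rfl
      have hDmed : ∀ c : Fin p, sampleMed (fun i' => D i' c) = ((n / 2 : ℕ) : ℝ) := by
        intro c
        apply sampleMed_eq_of hn _ _ l (by simp [hD, hl])
        have heq : (univ.filter fun i : Fin n => D i c < ((n/2 : ℕ) : ℝ))
            = univ.filter fun i : Fin n => i.val < n / 2 := by
          apply Finset.filter_congr
          intro i _
          simp only [hD]
          exact Nat.cast_lt
        rw [heq, card_filter_val_lt (by omega)]
      -- column j of D'
      have heq1 : (univ.filter fun i : Fin n => D' i j < ((n/2+1 : ℕ) : ℝ))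
          = univ.filter fun i : Fin n => i.val < n / 2 := by
        apply Finset.filter_congr
        intro i _
        by_cases hi : i = l
        · rw [hi, hD'l, if_neg hjne]
          refine iff_of_false (fun h => ?_) (by rw [hvall]; omega)
          have : n < n/2+1 := Nat.cast_lt.mp h
          omega
        · rw [hD'ne i j hi, Nat.cast_lt]
          have hvne : i.val ≠ n / 2 := fun hv => hi (Fin.ext hv)
          omega
      have hmed1 : sampleMed (fun i' => D' i' j) = ((n / 2 + 1 : ℕ) : ℝ) := by
        by_cases hcase : n / 2 + 1 = n
        · refine sampleMed_eq_of hn _ _ l ?_ (by rw [heq1, card_filter_val_lt (by omega)])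
          rw [hD'l, if_neg hjne]
          exact_mod_cast congrArg (Nat.cast : ℕ → ℝ) hcase.symm
        · have hlt : n / 2 + 1 < n := by omega
          refine sampleMed_eq_of hn _ _ ⟨n/2+1, hlt⟩ ?_
            (by rw [heq1, card_filter_val_lt (by omega)])
          have hne : (⟨n/2+1, hlt⟩ : Fin n) ≠ l := by
            simp only [hl, ne_eq, Fin.mk.injEq]
            omega
          rw [hD'ne _ j hne]
      -- column j' of D'
      have hmed2 : sampleMed (fun i' => D' i' j') = ((n / 2 - 1 : ℕ) : ℝ) := by
        have hne : (⟨n/2-1, by omega⟩ : Fin n) ≠ l := by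
          simp only [hl, ne_eq, Fin.mk.injEq]
          omega
        refine sampleMed_eq_of hn _ _ ⟨n/2-1, by omega⟩ (by rw [hD'ne _ j' hne]) ?_
        have heq : (univ.filter fun i : Fin n => D' i j' < ((n/2-1 : ℕ) : ℝ))
            = insert l (univ.filter fun i : Fin n => i.val < n / 2 - 1) := by
          ext i
          simp only [Finset.mem_insert, Finset.mem_filter, Finset.mem_univ, true_and]
          by_cases hi : i = l
          · rw [hi, hD'l, if_pos rfl]
            simp only [eq_self_iff_true, true_or, iff_true]
            have : (0:ℝ) ≤ ((n/2-1 : ℕ) : ℝ) := Nat.cast_nonneg _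
            linarith
          · rw [hD'ne _ j' hi, Nat.cast_lt]
            constructor
            · intro h; exact Or.inr h
            · rintro (h | h)
              · exact absurd h hi
              · exact h
        rw [heq, Finset.card_insert_of_notMem
            (by simp only [Finset.mem_filter, Finset.mem_univ, true_and, hvall]; omega),
          card_filter_val_lt (by omega)]
        omega
      have htD : tStat D j j' = n - n / 2 := by
        rw [tStat, hDmed j]
        have heq : (univ.filter fun i : Fin n =>
            ((n/2 : ℕ) : ℝ) ≤ D i j ∧ ((n/2 : ℕ) : ℝ) ≤ D i j')
            = univ.filter fun i : Fin n => n / 2 ≤ i.val := by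
          apply Finset.filter_congr
          intro i _
          simp only [hD]
          rw [Nat.cast_le, and_self]
        rw [heq, card_filter_le_val (by omega)]
      have htD' : tStat D' j j' = n - (n / 2 + 1) := by
        rw [tStat]
        rw [show (sampleMed fun i' => D' i' j) = ((n/2+1 : ℕ) : ℝ) from hmed1]
        rw [show (sampleMed fun i' => D' i' j') = ((n/2-1 : ℕ) : ℝ) from hmed2]
        have heq : (univ.filter fun i : Fin n =>
            ((n/2+1 : ℕ) : ℝ) ≤ D' i j ∧ ((n/2-1 : ℕ) : ℝ) ≤ D' i j')
            = univ.filter fun i : Fin n => n / 2 + 1 ≤ i.val := by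
          apply Finset.filter_congr
          intro i _
          by_cases hi : i = l
          · rw [hi, hD'l, hD'l, if_neg hjne, if_pos rfl]
            refine iff_of_false (fun h => ?_) (by rw [hvall]; omega)
            have h2 := h.2
            have : (0:ℝ) ≤ ((n/2-1 : ℕ) : ℝ) := Nat.cast_nonneg _
            linarith
          · rw [hD'ne _ j hi, hD'ne _ j' hi, Nat.cast_le, Nat.cast_le]
            constructor
            · intro h; exact h.1
            · intro h; exact ⟨h, by omega⟩
        rw [heq, card_filter_le_val (by omega)]
      rw [htD, htD']
      have hcast : ((n - (n/2+1) : ℕ) : ℤ) - ((n - n/2 : ℕ) : ℤ) = -1 := by omega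
      rw [hcast]
      simp
end

section
/- The renormalized geometric mechanism satisfies ε-differential privacy: let M be an integer query with sensitivity Δ, bounds L ≤ M(D) ≤ U, and let ε' > 0 satisfy ε' + log g(ε') = ε where g(ε') = (1 + α' − (α')^{d+1} − (α')^{U−L+1−d}) / (1 − (α')^{U−L+1}), d = min(Δ, ⌈(U−L)/2⌉), α' = e^{−ε'/Δ}. If the output is M(D) + δ with Pr(δ = k) = e^{−|k|ε'/Δ} / Σ_{l=L−M(D)}^{U−M(D)} e^{−|l|ε'/Δ} for k ∈ {L−M(D), …, U−M(D)}, then for all neighboring D, D' and all s ∈ {L, …, U}, Pr(output(D) = s) ≤ e^ε Pr(output(D') = s). -/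
open Finset

/-- Normalizing constant of the double-geometric distribution with ratio `α`
truncated to the integer interval `{L, …, U}`, centered at `M`. -/
noncomputable def dgNorm (α : ℝ) (L U M : ℤ) : ℝ :=
  ∑ l ∈ Finset.Icc L U, α ^ |l - M|

/-- Output probability of the renormalized geometric mechanism at `s`. -/
noncomputable def rgmProb (α : ℝ) (L U M s : ℤ) : ℝ :=
  α ^ |s - M| / dgNorm α L U M

/-- Convexity of `t ↦ α ^ t`: pairs with the same sum, inner pair is larger
(ordered case). -/
lemma rgm_pair_le_aux {α : ℝ} (h0 : 0 < α) (h1 : α < 1) {a b c e : ℤ}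
    (hca : c ≤ a) (hab : a ≤ b) (hsum : a + b = c + e) :
    α ^ a + α ^ b ≤ α ^ c + α ^ e := by
  have hk : (0:ℤ) ≤ a - c := by omega
  have ht1 : α ^ (a - c) ≤ 1 := zpow_le_one₀ h0 h1.le hk
  have h2 : α ^ b ≤ α ^ c :=
    zpow_le_zpow_right_of_le_one₀ h0 h1.le (by omega)
  have ha : α ^ a = α ^ c * α ^ (a - c) := by
    rw [← zpow_add₀ h0.ne']; congr 1; ring
  have he : α ^ e = α ^ b * α ^ (a - c) := by
    rw [← zpow_add₀ h0.ne']; congr 1; omega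
  nlinarith [mul_nonneg (sub_nonneg.2 h2) (sub_nonneg.2 ht1)]

lemma rgm_pair_le {α : ℝ} (h0 : 0 < α) (h1 : α < 1) {a b c e : ℤ}
    (hca : c ≤ a) (hcb : c ≤ b) (hsum : a + b = c + e) :
    α ^ a + α ^ b ≤ α ^ c + α ^ e := by
  rcases le_total a b with hab | hab
  · exact rgm_pair_le_aux h0 h1 hca hab hsum
  · have := rgm_pair_le_aux h0 h1 (e := e) hcb hab (by omega)
    linarith

/-- Left geometric sum over an integer interval. -/
lemma rgm_geomL {α : ℝ} (h0 : 0 < α) (L : ℤ) :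
    ∀ m : ℤ, L ≤ m →
      (1 - α) * ∑ l ∈ Finset.Icc L m, α ^ (m - l) = 1 - α ^ (m - L + 1) := by
  refine Int.le_induction ?_ ?_
  · simp
  · intro m hm ih
    have hins : Finset.Icc L (m + 1) = insert (m + 1) (Finset.Icc L m) := by
      ext x; simp [Finset.mem_Icc]; omega
    have hnotmem : (m + 1) ∉ Finset.Icc L m := by simp
    rw [hins, Finset.sum_insert hnotmem]
    have hre : ∑ l ∈ Finset.Icc L m, α ^ (m + 1 - l)
        = α * ∑ l ∈ Finset.Icc L m, α ^ (m - l) := by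
      rw [Finset.mul_sum]
      refine Finset.sum_congr rfl fun l _ => ?_
      rw [← zpow_one_add₀ h0.ne']; congr 1; ring
    have h2 : α ^ (m + 1 - L + 1) = α * α ^ (m - L + 1) := by
      rw [← zpow_one_add₀ h0.ne']; congr 1; ring
    rw [hre, sub_self, zpow_zero, h2]
    nlinarith [ih]

/-- Right geometric sum over an integer interval. -/
lemma rgm_geomR {α : ℝ} (h0 : 0 < α) {m U : ℤ} (h : m ≤ U) :
    (1 - α) * ∑ l ∈ Finset.Icc m U, α ^ (l - m) = 1 - α ^ (U - m + 1) := by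
  have hrev : ∑ l ∈ Finset.Icc m U, α ^ (l - m)
      = ∑ l ∈ Finset.Icc m U, α ^ (U - l) := by
    refine Finset.sum_nbij' (fun l => m + U - l) (fun l => m + U - l) ?_ ?_ ?_ ?_ ?_ <;>
      intros a ha <;> simp [Finset.mem_Icc] at * <;> first | omega | (congr 1; omega)
  rw [hrev, rgm_geomL h0 m U h]

/-- Closed form for the normalizing constant. -/
lemma rgm_dgNorm_eq {α : ℝ} (h0 : 0 < α) {L U m : ℤ} (hLm : L ≤ m) (hmU : m ≤ U) :
    (1 - α) * dgNorm α L U m = 1 + α - α ^ (m - L + 1) - α ^ (U - m + 1) := by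
  unfold dgNorm
  have hsplit : Finset.Icc L U = Finset.Icc L m ∪ Finset.Icc (m + 1) U := by
    ext x; simp [Finset.mem_Icc]; omega
  have hdisj : Disjoint (Finset.Icc L m) (Finset.Icc (m + 1) U) := by
    rw [Finset.disjoint_left]; intro x hx hx'
    simp [Finset.mem_Icc] at hx hx'; omega
  rw [hsplit, Finset.sum_union hdisj]
  have hs1 : ∑ l ∈ Finset.Icc L m, α ^ |l - m| = ∑ l ∈ Finset.Icc L m, α ^ (m - l) := by
    refine Finset.sum_congr rfl fun l hl => ?_
    simp [Finset.mem_Icc] at hl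
    rw [abs_of_nonpos (by omega : l - m ≤ 0)]
    congr 1; ring
  have hs2 : ∑ l ∈ Finset.Icc (m + 1) U, α ^ |l - m|
      = α * ∑ l ∈ Finset.Icc (m + 1) U, α ^ (l - (m + 1)) := by
    rw [Finset.mul_sum]
    refine Finset.sum_congr rfl fun l hl => ?_
    simp [Finset.mem_Icc] at hl
    rw [abs_of_nonneg (by omega : (0:ℤ) ≤ l - m), ← zpow_one_add₀ h0.ne']
    congr 1; omega
  rw [hs1, hs2]
  rcases lt_or_eq_of_le hmU with hlt | heqU
  · have h1 := rgm_geomL h0 L m hLm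
    have h2 := rgm_geomR h0 (m := m + 1) (U := U) (by omega)
    have h3 : α ^ (U - m + 1) = α * α ^ (U - (m + 1) + 1) := by
      rw [← zpow_one_add₀ h0.ne']; congr 1; ring
    nlinarith [h1, h2]
  · subst heqU
    have h1 := rgm_geomL h0 L m hLm
    have hempty : Finset.Icc (m + 1) m = ∅ := by
      apply Finset.Icc_eq_empty; omega
    rw [hempty]
    simp only [Finset.sum_empty, mul_zero, add_zero]
    have : m - m + 1 = (1:ℤ) := by ring
    rw [this, zpow_one]
    linarith [h1]

/-- The numerator function `H`. -/
noncomputable def rgmH (α : ℝ) (n t : ℤ) : ℝ := 1 + α - α ^ (t + 1) - α ^ (n + 1 - t)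

lemma rgmH_mono {α : ℝ} (h0 : 0 < α) (h1 : α < 1) {n s t : ℤ}
    (hs : 0 ≤ s) (hst : s ≤ t) (hsum : s + t ≤ n) : rgmH α n s ≤ rgmH α n t := by
  unfold rgmH
  have := rgm_pair_le h0 h1 (a := t + 1) (b := n + 1 - t) (c := s + 1) (e := n + 1 - s)
    (by omega) (by omega) (by omega)
  linarith

lemma rgmH_zero {α : ℝ} (h0 : 0 < α) {n : ℤ} : rgmH α n 0 = 1 - α ^ (n + 1) := by
  unfold rgmH
  rw [zero_add, zpow_one, sub_zero]; ring

lemma rgmH_zero_pos {α : ℝ} (h0 : 0 < α) (h1 : α < 1) {n : ℤ} (hn : 0 ≤ n) :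
    0 < rgmH α n 0 := by
  rw [rgmH_zero h0]
  have : α ^ (n + 1) < 1 := zpow_lt_one₀ h0 h1 (by omega)
  linarith

lemma rgmH_symm {α : ℝ} {n u : ℤ} : rgmH α n u = rgmH α n (n - u) := by
  unfold rgmH
  rw [show n - u + 1 = n + 1 - u from by ring, show n + 1 - (n - u) = u + 1 from by ring]
  ring

/-- Discrete concavity of `H`. -/
lemma rgmH_concave {α : ℝ} (h0 : 0 < α) (h1 : α < 1) {n a k : ℤ}
    (ha : 0 ≤ a) (hk : 0 ≤ k) :
    rgmH α n (a + k) + rgmH α n 0 ≤ rgmH α n a + rgmH α n k := by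
  unfold rgmH
  have hA := rgm_pair_le h0 h1 (a := a + 1) (b := k + 1) (c := 1) (e := a + k + 1)
    (by omega) (by omega) (by omega)
  have hB := rgm_pair_le h0 h1 (a := n + 1 - a) (b := n + 1 - k)
    (c := n + 1 - (a + k)) (e := n + 1 - 0) (by omega) (by omega) (by omega)
  have h1' : α ^ (0 + 1 : ℤ) = α ^ (1 : ℤ) := by norm_num
  simp only [zero_add, sub_zero] at *
  linarith

/-- Main product inequality for the ratio bound. -/
lemma rgmH_prod {α : ℝ} (h0 : 0 < α) (h1 : α < 1) {n Δ t t' : ℤ}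
    (hΔ : 0 ≤ Δ) (hn : 0 ≤ n)
    (ht : 0 ≤ t) (ht2 : t ≤ n) (ht' : 0 ≤ t') (ht'2 : t' ≤ n)
    (hd : |t - t'| ≤ Δ) :
    rgmH α n 0 * rgmH α n t' ≤ rgmH α n (min Δ ((n + 1) / 2)) * rgmH α n t := by
  set d := min Δ ((n + 1) / 2) with hd_def
  rw [abs_le] at hd
  set a := min t (n - t) with ha_def
  set b := min t' (n - t') with hb_def
  have hHa : rgmH α n t = rgmH α n a := by
    rw [ha_def]
    rcases le_total t (n - t) with h | h
    · rw [min_eq_left h]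
    · rw [min_eq_right h]; exact rgmH_symm
  have hHb : rgmH α n t' = rgmH α n b := by
    rw [hb_def]
    rcases le_total t' (n - t') with h | h
    · rw [min_eq_left h]
    · rw [min_eq_right h]; exact rgmH_symm
  have ha0 : 0 ≤ a := by omega
  have hb0 : 0 ≤ b := by omega
  have ha2 : 2 * a ≤ n := by omega
  have hb2 : 2 * b ≤ n := by omega
  have hab : b - a ≤ Δ := by omega
  have hd0 : 0 ≤ d := by omega
  have hdn : d ≤ n := by omega
  have hH0 : 0 < rgmH α n 0 := rgmH_zero_pos h0 h1 hn
  have hH0d : rgmH α n 0 ≤ rgmH α n d := rgmH_mono h0 h1 le_rfl hd0 (by omega)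
  have hH0a : rgmH α n 0 ≤ rgmH α n a := rgmH_mono h0 h1 le_rfl ha0 (by omega)
  rw [hHa, hHb]
  rcases le_total b a with hba | hba
  · have hba' : rgmH α n b ≤ rgmH α n a := rgmH_mono h0 h1 hb0 hba (by omega)
    calc rgmH α n 0 * rgmH α n b ≤ rgmH α n 0 * rgmH α n a := by
          exact mul_le_mul_of_nonneg_left hba' hH0.le
      _ ≤ rgmH α n d * rgmH α n a := by
          exact mul_le_mul_of_nonneg_right hH0d (by linarith)
  · set k := b - a with hk_def
    have hk0 : 0 ≤ k := by omega
    have hconc := rgmH_concave h0 h1 (n := n) (a := a) (k := k) ha0 hk0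
    rw [show a + k = b from by omega] at hconc
    have hkd : k ≤ d := by omega
    have hH0k : rgmH α n 0 ≤ rgmH α n k := rgmH_mono h0 h1 le_rfl hk0 (by omega)
    have hkd' : rgmH α n k ≤ rgmH α n d := rgmH_mono h0 h1 hk0 hkd (by omega)
    nlinarith [mul_nonneg (sub_nonneg.2 hH0a) (sub_nonneg.2 hH0k)]

lemma rgm_dgNorm_pos {α : ℝ} (h0 : 0 < α) {L U m : ℤ} (hLU : L ≤ U) :
    0 < dgNorm α L U m := by
  unfold dgNorm
  exact Finset.sum_pos (fun l _ => zpow_pos h0 _) (Finset.nonempty_Icc.2 hLU)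

/-- The renormalized geometric mechanism satisfies ε-differential privacy. -/
theorem rgm_dp {Dataset : Type*} (Neighbor : Dataset → Dataset → Prop)
    (M : Dataset → ℤ) (Δ : ℕ) (hΔ : 0 < Δ) (L U : ℤ) (hLU : L ≤ U)
    (hsens : ∀ D D', Neighbor D D' → |M D - M D'| ≤ (Δ : ℤ))
    (hbd : ∀ D, L ≤ M D ∧ M D ≤ U)
    (ε ε' : ℝ) (hε' : 0 < ε')
    (heq : ε' + Real.log
        ((1 + Real.exp (-ε' / Δ)
            - Real.exp (-ε' / Δ) ^ (min (Δ : ℤ) ((U - L + 1) / 2) + 1)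
            - Real.exp (-ε' / Δ) ^ (U - L + 1 - min (Δ : ℤ) ((U - L + 1) / 2))) /
          (1 - Real.exp (-ε' / Δ) ^ (U - L + 1))) = ε) :
    ∀ D D', Neighbor D D' → ∀ s : ℤ, L ≤ s → s ≤ U →
      rgmProb (Real.exp (-ε' / Δ)) L U (M D) s
        ≤ Real.exp ε * rgmProb (Real.exp (-ε' / Δ)) L U (M D') s := by
  intro D D' hN s hsL hsU
  set α : ℝ := Real.exp (-ε' / Δ) with hα_def
  have hΔR : (0:ℝ) < (Δ : ℝ) := by exact_mod_cast hΔ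
  have hα0 : 0 < α := Real.exp_pos _
  have hα1 : α < 1 := by
    rw [hα_def]
    rw [← Real.exp_zero]
    exact Real.exp_lt_exp.2 (div_neg_of_neg_of_pos (by linarith) hΔR)
  set m := M D with hm_def
  set m' := M D' with hm'_def
  set n := U - L with hn_def
  set d := min (Δ : ℤ) ((n + 1) / 2) with hd_def
  have hn0 : 0 ≤ n := by omega
  have hbm := hbd D
  have hbm' := hbd D'
  have hsens' : |m - m'| ≤ (Δ : ℤ) := hsens D D' hN
  have hΔ0 : (0:ℤ) ≤ (Δ : ℤ) := by positivity
  have hd0 : 0 ≤ d := by omega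
  have hdn : d ≤ n := by omega
  -- positivity of norms
  have hNpos : 0 < dgNorm α L U m := rgm_dgNorm_pos hα0 hLU
  have hN'pos : 0 < dgNorm α L U m' := rgm_dgNorm_pos hα0 hLU
  -- H facts
  have hH0 : 0 < rgmH α n 0 := rgmH_zero_pos hα0 hα1 hn0
  have hHd : rgmH α n 0 ≤ rgmH α n d := rgmH_mono hα0 hα1 le_rfl hd0 (by omega)
  have hHdpos : 0 < rgmH α n d := lt_of_lt_of_le hH0 hHd
  -- identify the expression in heq with rgmH ratio
  have hGdef : (1 + α - α ^ (min (Δ : ℤ) ((U - L + 1) / 2) + 1)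
      - α ^ (U - L + 1 - min (Δ : ℤ) ((U - L + 1) / 2))) / (1 - α ^ (U - L + 1))
      = rgmH α n d / rgmH α n 0 := by
    rw [rgmH_zero hα0]
    unfold rgmH
    congr 2 <;> rw [hd_def, hn_def]
  have hGpos : 0 < rgmH α n d / rgmH α n 0 := div_pos hHdpos hH0
  have hexpε : Real.exp ε = Real.exp ε' * (rgmH α n d / rgmH α n 0) := by
    rw [← heq, hGdef, Real.exp_add, Real.exp_log hGpos]
  -- step 1 : numerator bound
  have hαΔ : α ^ (Δ : ℤ) = Real.exp (-ε') := by
    rw [hα_def, zpow_natCast, ← Real.exp_nat_mul]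
    congr 1
    field_simp
  have hstep1 : α ^ |s - m| ≤ Real.exp ε' * α ^ |s - m'| := by
    have htri : |s - m'| - (Δ:ℤ) ≤ |s - m| := by
      have := abs_sub_abs_le_abs_sub (s - m') (s - m)
      have h2 : |s - m' - (s - m)| = |m - m'| := by congr 1; ring
      rw [h2] at this
      omega
    have h1 : α ^ |s - m| ≤ α ^ (|s - m'| - (Δ:ℤ)) :=
      zpow_le_zpow_right_of_le_one₀ hα0 hα1.le htri
    have h2 : α ^ (|s - m'| - (Δ:ℤ)) = Real.exp ε' * α ^ |s - m'| := by
      rw [sub_eq_add_neg, zpow_add₀ hα0.ne', zpow_neg, hαΔ, Real.exp_neg, inv_inv,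
        mul_comm]
    linarith [h1, h2.le]
  -- step 2 : norm ratio bound
  have hstep2 : rgmH α n 0 * dgNorm α L U m' ≤ rgmH α n d * dgNorm α L U m := by
    have h1α : 0 < 1 - α := by linarith
    have hNm : (1 - α) * dgNorm α L U m = rgmH α n (m - L) := by
      rw [rgm_dgNorm_eq hα0 hbm.1 hbm.2]
      unfold rgmH
      congr 2 <;> omega
    have hNm' : (1 - α) * dgNorm α L U m' = rgmH α n (m' - L) := by
      rw [rgm_dgNorm_eq hα0 hbm'.1 hbm'.2]
      unfold rgmH
      congr 2 <;> omega
    have hprod := rgmH_prod hα0 hα1 (n := n) (Δ := (Δ:ℤ)) (t := m - L) (t' := m' - L)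
      hΔ0 hn0 (by omega) (by omega) (by omega) (by omega)
      (by rw [show m - L - (m' - L) = m - m' from by ring]; exact hsens')
    rw [← hd_def] at hprod
    have hmul : (1 - α) * (rgmH α n 0 * dgNorm α L U m')
        ≤ (1 - α) * (rgmH α n d * dgNorm α L U m) := by
      calc (1 - α) * (rgmH α n 0 * dgNorm α L U m')
          = rgmH α n 0 * ((1 - α) * dgNorm α L U m') := by ring
        _ = rgmH α n 0 * rgmH α n (m' - L) := by rw [hNm']
        _ ≤ rgmH α n d * rgmH α n (m - L) := hprod
        _ = rgmH α n d * ((1 - α) * dgNorm α L U m) := by rw [hNm]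
        _ = (1 - α) * (rgmH α n d * dgNorm α L U m) := by ring
    exact le_of_mul_le_mul_left hmul h1α
  -- conclude
  unfold rgmProb
  have hfrac : (1:ℝ) / dgNorm α L U m
      ≤ (rgmH α n d / rgmH α n 0) / dgNorm α L U m' := by
    rw [div_div, div_le_div_iff₀ hNpos (by positivity)]
    calc 1 * (rgmH α n 0 * dgNorm α L U m') = rgmH α n 0 * dgNorm α L U m' := by ring
      _ ≤ rgmH α n d * dgNorm α L U m := hstep2
    -- remaining: rgmH α n d * dgNorm α L U m = (rgmH α n d) * dgNorm α L U m
  have hA : (0:ℝ) ≤ α ^ |s - m'| := (zpow_pos hα0 _).le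
  calc α ^ |s - m| / dgNorm α L U m
      ≤ (Real.exp ε' * α ^ |s - m'|) / dgNorm α L U m := by
        gcongr
    _ = (Real.exp ε' * α ^ |s - m'|) * (1 / dgNorm α L U m) := by ring
    _ ≤ (Real.exp ε' * α ^ |s - m'|)
          * ((rgmH α n d / rgmH α n 0) / dgNorm α L U m') := by
        apply mul_le_mul_of_nonneg_left hfrac (by positivity)
    _ = Real.exp ε * (α ^ |s - m'| / dgNorm α L U m') := by
        rw [hexpε]; ring
end

section
/- Let 0 < α < 1 and integers L ≤ M, M' ≤ U with |M − M'| ≤ Δ, and set d = min(Δ, ⌈(U−L)/2⌉). Then the ratio (1 + α − α^{M'−L+1} − α^{U+1−M'}) / (1 + α − α^{M−L+1} − α^{U+1−M}) is at most (1 + α − α^{d+1} − α^{U−L+1−d}) / (1 − α^{U−L+1}), i.e., the maximum of the normalizing-constant ratio of the truncated double-geometric distribution over pairs M, M' ∈ [L, U] with |M − M'| ≤ Δ equals g(α) = (1 + α − α^{d+1} − α^{U−L+1−d}) / (1 − α^{U−L+1}). -/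
section
variable (α : ℝ) (n : ℤ)

private noncomputable def Ff (x : ℤ) : ℝ := 1 + α - α ^ (x + 1) - α ^ (n + 1 - x)

private lemma Ff_pos (hα0 : 0 < α) (hα1 : α < 1) (x : ℤ) (hx : 0 ≤ x) (hxn : x ≤ n) :
    0 < Ff α n x := by
  have h1 : α ^ (x + 1) ≤ α ^ (1 : ℤ) :=
    zpow_le_zpow_right_of_le_one₀ hα0 hα1.le (by omega)
  have h2 : α ^ (n + 1 - x) ≤ α ^ (1 : ℤ) :=
    zpow_le_zpow_right_of_le_one₀ hα0 hα1.le (by omega)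
  simp only [zpow_one] at h1 h2
  simp only [Ff]
  nlinarith

private lemma Ff_sym (x : ℤ) : Ff α n x = Ff α n (n - x) := by
  simp only [Ff]
  rw [show n - x + 1 = n + 1 - x by ring, show n + 1 - (n - x) = x + 1 by ring]
  ring

private lemma Ff_step (hα0 : 0 < α) (hα1 : α < 1) (j : ℤ) (h2j : 2 * j + 1 ≤ n) :
    Ff α n j ≤ Ff α n (j + 1) := by
  have h : α ^ (n - j) ≤ α ^ (j + 1) :=
    zpow_le_zpow_right_of_le_one₀ hα0 hα1.le (by omega)
  have e1 : α ^ (j + 1 + 1) = α ^ (j + 1) * α := by rw [zpow_add₀ hα0.ne', zpow_one]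
  have e2 : α ^ (n + 1 - j) = α ^ (n - j) * α := by
    rw [show n + 1 - j = n - j + 1 by ring, zpow_add₀ hα0.ne', zpow_one]
  have e3 : α ^ (n + 1 - (j + 1)) = α ^ (n - j) := by ring_nf
  simp only [Ff, e1, e2, e3]
  nlinarith [sub_nonneg.2 h, sub_nonneg.2 hα1.le]

private lemma Ff_mono (hα0 : 0 < α) (hα1 : α < 1) (a b : ℤ) (hab : a ≤ b)
    (hb : 2 * b ≤ n + 1) : Ff α n a ≤ Ff α n b := by
  have H : ∀ j : ℤ, a ≤ j → (j ≤ b → Ff α n a ≤ Ff α n j) := by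
    intro j hj
    refine Int.le_induction (motive := fun j _ => j ≤ b → Ff α n a ≤ Ff α n j) ?_ ?_ j hj
    · intro _; exact le_refl _
    · intro m hm ih hmb
      exact le_trans (ih (by omega)) (Ff_step α n hα0 hα1 m (by omega))
  exact H b hab le_rfl

private lemma Ff_key (hα0 : 0 < α) (hα1 : α < 1) (x k : ℤ)
    (hx : 0 ≤ x) (hk : 0 ≤ k) (hxk : x + k ≤ n) :
    Ff α n 0 * Ff α n (x + k) ≤ Ff α n x * Ff α n k := by
  have hne := hα0.ne'
  have expand : ∀ a b c : ℤ, α ^ (a + b + c + 1) = α ^ a * α ^ b * α ^ c * α := by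
    intro a b c
    rw [zpow_add₀ hne, zpow_add₀ hne, zpow_add₀ hne, zpow_one]
  have e1 : Ff α n 0 = 1 - α ^ x * α ^ k * α ^ (n - x - k) * α := by
    simp only [Ff, show (0:ℤ) + 1 = 1 by ring, zpow_one,
      show n + 1 - 0 = x + k + (n - x - k) + 1 by ring, expand]
    ring
  have e2 : Ff α n (x + k) = 1 + α - α ^ x * α ^ k * α - α ^ (n - x - k) * α := by
    simp only [Ff, show x + k + 1 = x + k + 0 + 1 by ring,
      show n + 1 - (x + k) = 0 + 0 + (n - x - k) + 1 by ring, expand, zpow_zero]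
    ring
  have e3 : Ff α n x = 1 + α - α ^ x * α - α ^ k * α ^ (n - x - k) * α := by
    simp only [Ff, show x + 1 = x + 0 + 0 + 1 by ring,
      show n + 1 - x = 0 + k + (n - x - k) + 1 by ring, expand, zpow_zero]
    ring
  have e4 : Ff α n k = 1 + α - α ^ k * α - α ^ x * α ^ (n - x - k) * α := by
    simp only [Ff, show k + 1 = 0 + k + 0 + 1 by ring,
      show n + 1 - k = x + 0 + (n - x - k) + 1 by ring, expand, zpow_zero]
    ring
  rw [e1, e2, e3, e4]
  set u := α ^ x with hu
  set v := α ^ k with hv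
  set w := α ^ (n - x - k) with hw
  have hupos : 0 < u := zpow_pos hα0 _
  have hvpos : 0 < v := zpow_pos hα0 _
  have hwpos : 0 < w := zpow_pos hα0 _
  have hu1 : u ≤ 1 := zpow_le_one₀ hα0 hα1.le hx
  have hv1 : v ≤ 1 := zpow_le_one₀ hα0 hα1.le hk
  have hw1 : w ≤ 1 := zpow_le_one₀ hα0 hα1.le (by omega)
  have hbr : 0 ≤ (1 + α) * (1 + w) - α * w * (1 + u) * (1 + v) := by
    have huv : u * v ≤ 1 := mul_le_one₀ hu1 hvpos.le hv1
    nlinarith [mul_nonneg (mul_nonneg hα0.le hwpos.le)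
        (mul_nonneg (sub_nonneg.2 hu1) (sub_nonneg.2 hv1)),
      mul_nonneg (mul_nonneg hα0.le hwpos.le) (sub_nonneg.2 huv),
      mul_nonneg hα0.le (sub_nonneg.2 hw1),
      mul_nonneg hwpos.le (sub_nonneg.2 hα1.le), sub_nonneg.2 hw1]
  nlinarith [mul_nonneg (mul_nonneg (mul_nonneg hα0.le (sub_nonneg.2 hu1))
    (sub_nonneg.2 hv1)) hbr]

private lemma Ff_main (hα0 : 0 < α) (hα1 : α < 1) (Δ : ℤ) (hΔ : 0 < Δ) (hn : 0 ≤ n)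
    (x x' : ℤ) (hx0 : 0 ≤ x) (hxn : x ≤ n) (hx'0 : 0 ≤ x') (hx'n : x' ≤ n)
    (hd : |x - x'| ≤ Δ) :
    Ff α n 0 * Ff α n x' ≤ Ff α n (min Δ ((n + 1) / 2)) * Ff α n x := by
  set d := min Δ ((n + 1) / 2) with hdd
  have habs := abs_le.1 hd
  have hd0 : 0 ≤ d := by omega
  have hdn : d ≤ n := by omega
  have hFkd : ∀ k : ℤ, 0 ≤ k → k ≤ n → k ≤ Δ → Ff α n k ≤ Ff α n d := by
    intro k hk0 hkn hkΔ
    rcases le_or_gt k d with h | h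
    · exact Ff_mono α n hα0 hα1 k d h (by omega)
    · have hd2 : d = (n + 1) / 2 := by omega
      rw [Ff_sym α n k]
      exact Ff_mono α n hα0 hα1 (n - k) d (by omega) (by omega)
  rcases le_or_gt x x' with h | h
  · have key := Ff_key α n hα0 hα1 x (x' - x) hx0 (by omega) (by omega)
    rw [show x + (x' - x) = x' by ring] at key
    have hk := hFkd (x' - x) (by omega) (by omega) (by omega)
    have px := Ff_pos α n hα0 hα1 x hx0 hxn
    calc Ff α n 0 * Ff α n x' ≤ Ff α n x * Ff α n (x' - x) := key
      _ ≤ Ff α n x * Ff α n d := by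
          exact mul_le_mul_of_nonneg_left hk px.le
      _ = Ff α n d * Ff α n x := mul_comm _ _
  · have key := Ff_key α n hα0 hα1 (n - x) (x - x') (by omega) (by omega) (by omega)
    rw [show n - x + (x - x') = n - x' by ring] at key
    rw [Ff_sym α n x', Ff_sym α n x]
    have hk := hFkd (x - x') (by omega) (by omega) (by omega)
    have px := Ff_pos α n hα0 hα1 (n - x) (by omega) (by omega)
    calc Ff α n 0 * Ff α n (n - x') ≤ Ff α n (n - x) * Ff α n (x - x') := key
      _ ≤ Ff α n (n - x) * Ff α n d := mul_le_mul_of_nonneg_left hk px.le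
      _ = Ff α n d * Ff α n (n - x) := mul_comm _ _
end

/-- The ratio of truncated double-geometric normalizing constants over pairs
`M, M' ∈ [L, U]` with `|M − M'| ≤ Δ` is bounded by, and its maximum equals,
`g(α) = (1 + α − α^{d+1} − α^{U−L+1−d})/(1 − α^{U−L+1})` with
`d = min(Δ, ⌈(U−L)/2⌉)`. -/
theorem truncated_norm_ratio_max (α : ℝ) (hα0 : 0 < α) (hα1 : α < 1)
    (L U : ℤ) (hLU : L ≤ U) (Δ : ℤ) (hΔ : 0 < Δ) :
    (∀ M M' : ℤ, L ≤ M → M ≤ U → L ≤ M' → M' ≤ U → |M - M'| ≤ Δ →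
        (1 + α - α ^ (M' - L + 1) - α ^ (U + 1 - M')) /
            (1 + α - α ^ (M - L + 1) - α ^ (U + 1 - M))
          ≤ (1 + α - α ^ (min Δ ((U - L + 1) / 2) + 1)
              - α ^ (U - L + 1 - min Δ ((U - L + 1) / 2))) /
            (1 - α ^ (U - L + 1))) ∧
    (∃ M M' : ℤ, L ≤ M ∧ M ≤ U ∧ L ≤ M' ∧ M' ≤ U ∧ |M - M'| ≤ Δ ∧
        (1 + α - α ^ (M' - L + 1) - α ^ (U + 1 - M')) /
            (1 + α - α ^ (M - L + 1) - α ^ (U + 1 - M))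
          = (1 + α - α ^ (min Δ ((U - L + 1) / 2) + 1)
              - α ^ (U - L + 1 - min Δ ((U - L + 1) / 2))) /
            (1 - α ^ (U - L + 1))) := by
  set n := U - L with hn
  have hn0 : 0 ≤ n := by omega
  set d := min Δ ((n + 1) / 2) with hdd
  have hd0 : 0 ≤ d := by omega
  have hdn : d ≤ n := by omega
  have hF : ∀ M : ℤ, 1 + α - α ^ (M - L + 1) - α ^ (U + 1 - M) = Ff α n (M - L) := by
    intro M
    simp only [Ff]
    rw [show n + 1 - (M - L) = U + 1 - M by omega]
  have hFd : (1 : ℝ) + α - α ^ (d + 1) - α ^ (n + 1 - d) = Ff α n d := rfl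
  have hF0 : (1 : ℝ) - α ^ (n + 1) = Ff α n 0 := by
    simp only [Ff]
    rw [show n + 1 - 0 = n + 1 by ring, show (0:ℤ) + 1 = 1 by ring, zpow_one]
    ring
  constructor
  · intro M M' h1 h2 h3 h4 h5
    rw [hF M, hF M', hFd, hF0]
    have pM := Ff_pos α n hα0 hα1 (M - L) (by omega) (by omega)
    have p0 := Ff_pos α n hα0 hα1 0 le_rfl hn0
    rw [div_le_div_iff₀ pM p0, mul_comm]
    have h5' : |(M - L) - (M' - L)| ≤ Δ := by
      rw [show (M - L) - (M' - L) = M - M' by ring]; exact h5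
    exact Ff_main α n hα0 hα1 Δ hΔ hn0 (M - L) (M' - L) (by omega) (by omega)
      (by omega) (by omega) h5'
  · refine ⟨L, L + d, le_rfl, hLU, by omega, by omega, ?_, ?_⟩
    · rw [show L - (L + d) = -d by ring, abs_neg, abs_of_nonneg hd0]; omega
    · rw [show L + d - L + 1 = d + 1 by ring, show U + 1 - (L + d) = n + 1 - d by omega,
        show L - L + 1 = 1 by ring, show U + 1 - L = n + 1 by omega, zpow_one]
      congr 1
      ring
end
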